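/- With $g_0$ a bounded nonvanishing $C^2$ solution of $-g_0'' + q g_0 = 0$ on a bounded interval $I$ containing $0$, with $1/g_0$ bounded, and $\widetilde{X}^{(n)}$ the recursive integrals ($\widetilde{X}^{(0)}\equiv 1$, odd step weight $g_0^2$, even step weight $g_0^{-2}$), the series $u_1(x) = g_0(x) \sum_{\text{even } n \geq 0} \frac{\omega^n}{n!} \widetilde{X}^{(n)}(x)$ converges uniformly on $I$ and defines a solution of the equation $-u_1'' + q u_1 + \omega^2 u_1 = 0$ on $I$, for any $\omega \in \mathbb{C}$. -/

import Mathlib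

/-!
Write `Yₙ = ωⁿ/n! · X̃⁽ⁿ⁾` and `wₙ` for the weight of the `n`-th integration step. By the
fundamental theorem of calculus `Y'ₙ₊₁ = ω wₙ₊₁ Yₙ`, and induction gives
`‖X̃⁽ⁿ⁾(x)‖ ≤ (C|x|)ⁿ` for a bound `C` of both weights, so `‖Yₙ‖ ≤ (‖ω‖ C L)ⁿ/n!` on `I ⊆ [-L, L]`.
Hence the even and odd series `S = ∑ Y₂ₖ`, `T = ∑ Y₂ₖ₊₁` converge uniformly and may be
differentiated termwise: `S' = ω T / g₀²` and `T' = ω g₀² S`. For `u = g₀ S` this gives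
`u' = g₀' S + ω T / g₀`, and differentiating once more the two `g₀' T` terms cancel, leaving
`u'' = g₀'' S + ω² g₀ S = (q + ω²) u`.
-/

open scoped Nat

/-- The SPPS recursive integrals: `spps wodd weven 0 ≡ 1` and
`spps wodd weven n x = n ∫₀ˣ spps wodd weven (n-1) · w`, where the weight `w`
is `wodd` when `n` is odd and `weven` when `n` is even. -/
noncomputable def spps (wodd weven : ℝ → ℂ) : ℕ → ℝ → ℂ
  | 0 => fun _ => 1
  | n + 1 => fun x => (n + 1 : ℂ) *
      ∫ t in (0:ℝ)..x,
        spps wodd weven n t * (if (n + 1) % 2 = 1 then wodd t else weven t)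

open Set Filter Topology

theorem hasDerivAt_integral_of_continuousOn {E : Type*} [NormedAddCommGroup E]
    [NormedSpace ℝ E] [CompleteSpace E] {f : ℝ → E} {s : Set ℝ} {a x : ℝ} (hs : IsOpen s)
    (hs' : s.OrdConnected) (ha : a ∈ s) (hf : ContinuousOn f s) (hx : x ∈ s) :
    HasDerivAt (fun u => ∫ t in a..u, f t) (f x) x :=
  intervalIntegral.integral_hasDerivAt_right (hf.mono (hs'.uIcc_subset ha hx)).intervalIntegrable
    (hf.stronglyMeasurableAtFilter hs x hx) ((hf x hx).continuousAt (hs.mem_nhds hx))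

theorem tendstoUniformlyOn_mul_tsum {α 𝕜 : Type*} [NormedField 𝕜] [CompleteSpace 𝕜]
    {f : ℕ → α → 𝕜} {g : α → 𝕜} {u : ℕ → ℝ} {s : Set α} {M : ℝ} (hu : Summable u)
    (hf : ∀ n, ∀ x ∈ s, ‖f n x‖ ≤ u n) (hg : ∀ x ∈ s, ‖g x‖ ≤ M) :
    TendstoUniformlyOn (fun N x => g x * ∑ n ∈ Finset.range N, f n x)
      (fun x => g x * ∑' n, f n x) atTop s := by
  simp_rw [Finset.mul_sum, ← tsum_mul_left]
  refine tendstoUniformlyOn_tsum_nat (hu.mul_left M) fun n x hx => ?_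
  rw [norm_mul]
  exact mul_le_mul (hg x hx) (hf n x hx) (norm_nonneg _) ((norm_nonneg _).trans (hg x hx))

section Spps

variable {wodd weven : ℝ → ℂ} {s : Set ℝ} {C : ℝ}

noncomputable def sppsWeight (wodd weven : ℝ → ℂ) (n : ℕ) (t : ℝ) : ℂ :=
  if n % 2 = 1 then wodd t else weven t

theorem sppsWeight_odd (k : ℕ) : sppsWeight wodd weven (2 * k + 1) = wodd := by
  ext t; simp [sppsWeight]

theorem sppsWeight_even (k : ℕ) : sppsWeight wodd weven (2 * k + 2) = weven := by
  ext t; simp [sppsWeight, show (2 * k + 2) % 2 = 0 by omega]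

theorem continuousOn_sppsWeight (hodd : ContinuousOn wodd s) (heven : ContinuousOn weven s)
    (n : ℕ) : ContinuousOn (sppsWeight wodd weven n) s := by
  unfold sppsWeight
  split_ifs <;> assumption

theorem norm_sppsWeight_le (hC : ∀ t ∈ s, ‖wodd t‖ ≤ C ∧ ‖weven t‖ ≤ C) (n : ℕ) {t : ℝ}
    (ht : t ∈ s) : ‖sppsWeight wodd weven n t‖ ≤ C := by
  unfold sppsWeight
  split_ifs
  exacts [(hC t ht).1, (hC t ht).2]

theorem spps_zero (x : ℝ) : spps wodd weven 0 x = 1 := rfl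

theorem spps_succ (n : ℕ) : spps wodd weven (n + 1) =
    fun x => (n + 1 : ℂ) * ∫ t in (0:ℝ)..x, spps wodd weven n t * sppsWeight wodd weven (n + 1) t :=
  rfl

theorem continuousOn_spps (hs : IsOpen s) (hs' : s.OrdConnected) (h0 : 0 ∈ s)
    (hodd : ContinuousOn wodd s) (heven : ContinuousOn weven s) (n : ℕ) :
    ContinuousOn (spps wodd weven n) s := by
  induction n with
  | zero => exact continuousOn_const
  | succ n ih =>
    rw [spps_succ]
    exact fun x hx => ((hasDerivAt_integral_of_continuousOn hs hs' h0
      (ih.mul (continuousOn_sppsWeight hodd heven _)) hx).const_mul _).continuousAt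
      |>.continuousWithinAt

theorem hasDerivAt_spps_succ (hs : IsOpen s) (hs' : s.OrdConnected) (h0 : 0 ∈ s)
    (hodd : ContinuousOn wodd s) (heven : ContinuousOn weven s) (n : ℕ) {x : ℝ} (hx : x ∈ s) :
    HasDerivAt (spps wodd weven (n + 1))
      ((n + 1) * (spps wodd weven n x * sppsWeight wodd weven (n + 1) x)) x := by
  rw [spps_succ]
  exact (hasDerivAt_integral_of_continuousOn hs hs' h0
    ((continuousOn_spps hs hs' h0 hodd heven n).mul (continuousOn_sppsWeight hodd heven _))
    hx).const_mul _

theorem norm_spps_le (hs' : s.OrdConnected) (h0 : 0 ∈ s)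
    (hC : ∀ t ∈ s, ‖wodd t‖ ≤ C ∧ ‖weven t‖ ≤ C) (n : ℕ) {x : ℝ} (hx : x ∈ s) :
    ‖spps wodd weven n x‖ ≤ (C * |x|) ^ n := by
  induction n generalizing x with
  | zero => simp [spps_zero]
  | succ n ih =>
    have hC0 : 0 ≤ C := (norm_nonneg _).trans (hC 0 h0).1
    -- `|t - 0|` is the shape of `integral_pow_abs_sub_uIoc`, which evaluates the bound below.
    have hint : ‖∫ t in (0:ℝ)..x, spps wodd weven n t * sppsWeight wodd weven (n + 1) t‖
        ≤ |∫ t in (0:ℝ)..x, C ^ (n + 1) * |t - 0| ^ n| := by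
      refine intervalIntegral.norm_integral_le_abs_of_norm_le ?_
        (Continuous.intervalIntegrable (by fun_prop) _ _)
      filter_upwards [MeasureTheory.ae_restrict_mem measurableSet_uIoc] with t ht
      have hts : t ∈ s := hs'.uIcc_subset h0 hx (uIoc_subset_uIcc ht)
      calc ‖spps wodd weven n t * sppsWeight wodd weven (n + 1) t‖
          ≤ (C * |t|) ^ n * C := by
            rw [norm_mul]
            exact mul_le_mul (ih hts) (norm_sppsWeight_le hC _ hts) (norm_nonneg _)
              (by positivity)
        _ = C ^ (n + 1) * |t - 0| ^ n := by rw [sub_zero]; ring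
    rw [intervalIntegral.integral_const_mul, abs_mul, intervalIntegral.abs_intervalIntegral_eq,
      integral_pow_abs_sub_uIoc, sub_zero, abs_of_nonneg (by positivity : 0 ≤ C ^ (n + 1)),
      abs_of_nonneg (by positivity : 0 ≤ |x| ^ (n + 1) / (n + 1))] at hint
    rw [spps_succ, norm_mul]
    calc ‖(n + 1 : ℂ)‖ * ‖∫ t in (0:ℝ)..x, spps wodd weven n t * sppsWeight wodd weven (n + 1) t‖
        ≤ (n + 1) * (C ^ (n + 1) * (|x| ^ (n + 1) / (n + 1))) := by
          gcongr
          exact_mod_cast (Complex.norm_natCast (n + 1)).le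
      _ = (C * |x|) ^ (n + 1) := by
          field_simp
          ring

variable {ω : ℂ} {L : ℝ}

noncomputable def sppsTerm (ω : ℂ) (wodd weven : ℝ → ℂ) (n : ℕ) (x : ℝ) : ℂ :=
  ω ^ n / n ! * spps wodd weven n x

theorem hasDerivAt_sppsTerm_succ (hs : IsOpen s) (hs' : s.OrdConnected) (h0 : 0 ∈ s)
    (hodd : ContinuousOn wodd s) (heven : ContinuousOn weven s) (n : ℕ) {x : ℝ} (hx : x ∈ s) :
    HasDerivAt (sppsTerm ω wodd weven (n + 1))
      (ω * (sppsTerm ω wodd weven n x * sppsWeight wodd weven (n + 1) x)) x := by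
  refine ((hasDerivAt_spps_succ hs hs' h0 hodd heven n hx).const_mul
    (ω ^ (n + 1) / (n + 1)! : ℂ)).congr_deriv ?_
  rw [sppsTerm, Nat.factorial_succ]
  push_cast
  field_simp
  ring

theorem norm_sppsTerm_le (hs' : s.OrdConnected) (h0 : 0 ∈ s)
    (hC : ∀ t ∈ s, ‖wodd t‖ ≤ C ∧ ‖weven t‖ ≤ C) (hL : ∀ x ∈ s, |x| ≤ L) (n : ℕ) {x : ℝ}
    (hx : x ∈ s) : ‖sppsTerm ω wodd weven n x‖ ≤ (‖ω‖ * C * L) ^ n / n ! := by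
  have hC0 : 0 ≤ C := (norm_nonneg _).trans (hC 0 h0).1
  rw [sppsTerm, norm_mul, norm_div, norm_pow, Complex.norm_natCast]
  calc ‖ω‖ ^ n / n ! * ‖spps wodd weven n x‖ ≤ ‖ω‖ ^ n / n ! * (C * L) ^ n := by
        gcongr
        exact (norm_spps_le hs' h0 hC n hx).trans (by gcongr; exact hL x hx)
    _ = (‖ω‖ * C * L) ^ n / n ! := by ring

theorem summable_sppsTerm_comp (hs' : s.OrdConnected) (h0 : 0 ∈ s)
    (hC : ∀ t ∈ s, ‖wodd t‖ ≤ C ∧ ‖weven t‖ ≤ C) (hL : ∀ x ∈ s, |x| ≤ L) {e : ℕ → ℕ}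
    (he : e.Injective) {x : ℝ} (hx : x ∈ s) :
    Summable fun k => sppsTerm ω wodd weven (e k) x :=
  .of_norm_bounded ((Real.summable_pow_div_factorial _).comp_injective he)
    fun k => norm_sppsTerm_le hs' h0 hC hL (e k) hx

theorem hasDerivAt_tsum_sppsTerm_comp_succ (hs : IsOpen s) (hs' : s.OrdConnected) (h0 : 0 ∈ s)
    (hodd : ContinuousOn wodd s) (heven : ContinuousOn weven s)
    (hC : ∀ t ∈ s, ‖wodd t‖ ≤ C ∧ ‖weven t‖ ≤ C) (hL : ∀ x ∈ s, |x| ≤ L) {e : ℕ → ℕ}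
    (he : e.Injective) {w : ℝ → ℂ} (hw : ∀ k, sppsWeight wodd weven (e k + 1) = w) {x : ℝ}
    (hx : x ∈ s) :
    HasDerivAt (fun y => ∑' k, sppsTerm ω wodd weven (e k + 1) y)
      (ω * ((∑' k, sppsTerm ω wodd weven (e k) x) * w x)) x := by
  have hbound : ∀ k, ∀ y ∈ s, ‖ω * (sppsTerm ω wodd weven (e k) y * w y)‖
      ≤ ‖ω‖ * ((‖ω‖ * C * L) ^ e k / (e k)! * C) := fun k y hy => by
    rw [norm_mul, norm_mul, ← hw k]
    have hterm := norm_sppsTerm_le (ω := ω) hs' h0 hC hL (e k) hy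
    gcongr
    exacts [(norm_nonneg _).trans hterm, norm_sppsWeight_le hC _ hy]
  have hderiv := hasDerivAt_tsum_of_isPreconnected
    ((((Real.summable_pow_div_factorial _).comp_injective he).mul_right C).mul_left ‖ω‖)
    hs hs'.isPreconnected
    (fun k y hy => by simpa only [hw] using hasDerivAt_sppsTerm_succ hs hs' h0 hodd heven (e k) hy)
    hbound h0
    (summable_sppsTerm_comp hs' h0 hC hL (e := (e · + 1)) ((add_left_injective 1).comp he) h0) hx
  rwa [tsum_mul_left, tsum_mul_right] at hderiv

theorem hasDerivAt_tsum_sppsTerm_odd (hs : IsOpen s) (hs' : s.OrdConnected) (h0 : 0 ∈ s)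
    (hodd : ContinuousOn wodd s) (heven : ContinuousOn weven s)
    (hC : ∀ t ∈ s, ‖wodd t‖ ≤ C ∧ ‖weven t‖ ≤ C) (hL : ∀ x ∈ s, |x| ≤ L) {x : ℝ} (hx : x ∈ s) :
    HasDerivAt (fun y => ∑' k, sppsTerm ω wodd weven (2 * k + 1) y)
      (ω * ((∑' k, sppsTerm ω wodd weven (2 * k) x) * wodd x)) x :=
  hasDerivAt_tsum_sppsTerm_comp_succ hs hs' h0 hodd heven hC hL (e := (2 * ·))
    (mul_right_injective₀ two_ne_zero) sppsWeight_odd hx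

theorem hasDerivAt_tsum_sppsTerm_even (hs : IsOpen s) (hs' : s.OrdConnected) (h0 : 0 ∈ s)
    (hodd : ContinuousOn wodd s) (heven : ContinuousOn weven s)
    (hC : ∀ t ∈ s, ‖wodd t‖ ≤ C ∧ ‖weven t‖ ≤ C) (hL : ∀ x ∈ s, |x| ≤ L) {x : ℝ} (hx : x ∈ s) :
    HasDerivAt (fun y => ∑' k, sppsTerm ω wodd weven (2 * k) y)
      (ω * ((∑' k, sppsTerm ω wodd weven (2 * k + 1) x) * weven x)) x := by
  -- Splitting off `Y₀ = 1` leaves only terms `Y₂ₖ₊₁₊₁` with a common weight `weven`.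
  have hsplit : (fun y => ∑' k, sppsTerm ω wodd weven (2 * k) y)
      =ᶠ[𝓝 x] fun y => 1 + ∑' k, sppsTerm ω wodd weven (2 * k + 1 + 1) y := by
    filter_upwards [hs.mem_nhds hx] with y hy
    rw [(summable_sppsTerm_comp hs' h0 hC hL (mul_right_injective₀ two_ne_zero) hy
      ).tsum_eq_zero_add]
    simp [sppsTerm, spps_zero, mul_add]
  exact ((hasDerivAt_tsum_sppsTerm_comp_succ hs hs' h0 hodd heven hC hL (e := (2 * · + 1))
    (fun a b h => by simpa using h) sppsWeight_even hx).const_add 1).congr_of_eventuallyEq hsplit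

end Spps

theorem deriv_deriv_mul_eq_of_system {g g' q S T : ℝ → ℂ} {ω : ℂ} {s : Set ℝ} {x : ℝ}
    (hs : IsOpen s) (hg : ∀ y ∈ s, HasDerivAt g (g' y) y) (hg' : ∀ y ∈ s, HasDerivAt g' (q y * g y) y)
    (hg0 : ∀ y ∈ s, g y ≠ 0) (hS : ∀ y ∈ s, HasDerivAt S (ω * (T y * (g y ^ 2)⁻¹)) y)
    (hT : ∀ y ∈ s, HasDerivAt T (ω * (S y * g y ^ 2)) y) (hx : x ∈ s) :
    deriv (deriv fun y => g y * S y) x = q x * (g x * S x) + ω ^ 2 * (g x * S x) := by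
  have hfirst : deriv (fun y => g y * S y) =ᶠ[𝓝 x] fun y => g' y * S y + ω * T y / g y := by
    filter_upwards [hs.mem_nhds hx] with y hy
    refine ((hg y hy).mul (hS y hy)).deriv.trans ?_
    field_simp [hg0 y hy]
  rw [hfirst.deriv_eq]
  refine (((hg' x hx).mul (hS x hx)).add
    (((hT x hx).const_mul ω).div (hg x hx) (hg0 x hx))).deriv.trans ?_
  field_simp [hg0 x hx]
  ring

theorem spps_u1_solution_general (a b : ℝ) (ha : a < 0) (hb : 0 < b) (ω : ℂ)
    (q g0 : ℝ → ℂ)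
    (hg : ContDiffOn ℝ 2 g0 (Set.Ioo a b))
    (hg0 : ∀ x ∈ Set.Ioo a b, g0 x ≠ 0)
    (heq : ∀ x ∈ Set.Ioo a b, deriv (deriv g0) x = q x * g0 x)
    (hbd : ∃ M : ℝ, ∀ x ∈ Set.Ioo a b, ‖g0 x‖ ≤ M ∧ ‖(g0 x)⁻¹‖ ≤ M) :
    TendstoUniformlyOn
      (fun N x => g0 x * ∑ k ∈ Finset.range N,
        ω ^ (2 * k) / ((2 * k)! : ℂ) *
          spps (fun t => g0 t ^ 2) (fun t => (g0 t ^ 2)⁻¹) (2 * k) x)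
      (fun x => g0 x * ∑' k : ℕ,
        ω ^ (2 * k) / ((2 * k)! : ℂ) *
          spps (fun t => g0 t ^ 2) (fun t => (g0 t ^ 2)⁻¹) (2 * k) x)
      Filter.atTop (Set.Ioo a b) ∧
    ∀ x ∈ Set.Ioo a b,
      -(deriv (deriv (fun y => g0 y * ∑' k : ℕ,
          ω ^ (2 * k) / ((2 * k)! : ℂ) *
            spps (fun t => g0 t ^ 2) (fun t => (g0 t ^ 2)⁻¹) (2 * k) y)) x) +
        q x * (g0 x * ∑' k : ℕ,
          ω ^ (2 * k) / ((2 * k)! : ℂ) *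
            spps (fun t => g0 t ^ 2) (fun t => (g0 t ^ 2)⁻¹) (2 * k) x) +
        ω ^ 2 * (g0 x * ∑' k : ℕ,
          ω ^ (2 * k) / ((2 * k)! : ℂ) *
            spps (fun t => g0 t ^ 2) (fun t => (g0 t ^ 2)⁻¹) (2 * k) x) = 0 := by
  obtain ⟨M, hM⟩ := hbd
  have h0 : (0 : ℝ) ∈ Ioo a b := ⟨ha, hb⟩
  have hw : ∀ t ∈ Ioo a b, ‖g0 t ^ 2‖ ≤ M ^ 2 ∧ ‖(g0 t ^ 2)⁻¹‖ ≤ M ^ 2 := fun t ht => by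
    rw [norm_inv, norm_pow, ← inv_pow, ← norm_inv]
    exact ⟨pow_le_pow_left₀ (norm_nonneg _) (hM t ht).1 2,
      pow_le_pow_left₀ (norm_nonneg _) (hM t ht).2 2⟩
  have hL : ∀ x ∈ Ioo a b, |x| ≤ max (-a) b := fun x hx =>
    abs_le.2 ⟨by linarith [hx.1, le_max_left (-a) b], hx.2.le.trans (le_max_right _ _)⟩
  have hodd : ContinuousOn (fun t => g0 t ^ 2) (Ioo a b) := hg.continuousOn.pow 2
  have heven : ContinuousOn (fun t => (g0 t ^ 2)⁻¹) (Ioo a b) :=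
    hodd.inv₀ fun t ht => pow_ne_zero 2 (hg0 t ht)
  have hdg : ContDiffOn ℝ 1 (deriv g0) (Ioo a b) := hg.deriv_of_isOpen isOpen_Ioo (by norm_num)
  refine ⟨tendstoUniformlyOn_mul_tsum
    ((Real.summable_pow_div_factorial _).comp_injective (mul_right_injective₀ two_ne_zero))
    (fun k x hx => norm_sppsTerm_le ordConnected_Ioo h0 hw hL (2 * k) hx)
    fun x hx => (hM x hx).1, fun x hx => ?_⟩
  have hu := deriv_deriv_mul_eq_of_system (ω := ω) isOpen_Ioo
    (fun y hy => (hg.differentiableOn two_ne_zero).hasDerivAt (isOpen_Ioo.mem_nhds hy))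
    (fun y hy => heq y hy ▸ (hdg.differentiableOn one_ne_zero).hasDerivAt (isOpen_Ioo.mem_nhds hy))
    hg0
    (fun y hy => hasDerivAt_tsum_sppsTerm_even isOpen_Ioo ordConnected_Ioo h0 hodd heven hw hL hy)
    (fun y hy => hasDerivAt_tsum_sppsTerm_odd isOpen_Ioo ordConnected_Ioo h0 hodd heven hw hL hy) hx
  simp only [sppsTerm] at hu
  rw [hu]
  ring

/-- The SPPS series `u₁ = g₀ ∑_{even n} ωⁿ/n! X̃⁽ⁿ⁾` converges uniformly on the
interval and solves `-u₁'' + q u₁ + ω² u₁ = 0`. -/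
theorem spps_u1_solution (a b : ℝ) (ha : a < 0) (hb : 0 < b) (ω : ℂ)
    (q g0 : ℝ → ℂ)
    (hq : ContinuousOn q (Set.Ioo a b))
    (hg : ContDiffOn ℝ 2 g0 (Set.Ioo a b))
    (hg0 : ∀ x ∈ Set.Ioo a b, g0 x ≠ 0)
    (heq : ∀ x ∈ Set.Ioo a b, deriv (deriv g0) x = q x * g0 x)
    (hbd : ∃ M : ℝ, ∀ x ∈ Set.Ioo a b, ‖g0 x‖ ≤ M ∧ ‖(g0 x)⁻¹‖ ≤ M) :
    TendstoUniformlyOn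
      (fun N x => g0 x * ∑ k ∈ Finset.range N,
        ω ^ (2 * k) / ((2 * k)! : ℂ) *
          spps (fun t => g0 t ^ 2) (fun t => (g0 t ^ 2)⁻¹) (2 * k) x)
      (fun x => g0 x * ∑' k : ℕ,
        ω ^ (2 * k) / ((2 * k)! : ℂ) *
          spps (fun t => g0 t ^ 2) (fun t => (g0 t ^ 2)⁻¹) (2 * k) x)
      Filter.atTop (Set.Ioo a b) ∧
    ∀ x ∈ Set.Ioo a b,
      -(deriv (deriv (fun y => g0 y * ∑' k : ℕ,
          ω ^ (2 * k) / ((2 * k)! : ℂ) *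
            spps (fun t => g0 t ^ 2) (fun t => (g0 t ^ 2)⁻¹) (2 * k) y)) x) +
        q x * (g0 x * ∑' k : ℕ,
          ω ^ (2 * k) / ((2 * k)! : ℂ) *
            spps (fun t => g0 t ^ 2) (fun t => (g0 t ^ 2)⁻¹) (2 * k) x) +
        ω ^ 2 * (g0 x * ∑' k : ℕ,
          ω ^ (2 * k) / ((2 * k)! : ℂ) *
            spps (fun t => g0 t ^ 2) (fun t => (g0 t ^ 2)⁻¹) (2 * k) x) = 0 :=
  spps_u1_solution_general a b ha hb ω q g0 hg hg0 heq hbd
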